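/- arXiv:2101.10088 — 3 statements merged into one kernel-verified Lean document; each statement's English description precedes it below -/
import Mathlib

section
/- Let κ be an uncountable cardinal and give κ the discrete topology. Then the countable product κ^ω can be covered by cf([κ]^{ℵ₀}, ⊆) many Polish subspaces, and every covering of κ^ω by Polish (equivalently, separable) subspaces has cardinality at least cf([κ]^{ℵ₀}, ⊆). -/
open Cardinal Set

/-- The least cardinality of a family of countably infinite subsets of `A` that is
cofinal in `([A]^{ℵ₀}, ⊆)`. -/
noncomputable def cofCountableSubsets (A : Type*) : Cardinal :=
  sInf { c | ∃ D : Set (Set A), (∀ s ∈ D, s.Countable ∧ s.Infinite) ∧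
    (∀ t : Set A, t.Countable → t.Infinite → ∃ s ∈ D, t ⊆ s) ∧ #D = c }

/-!
A separable subspace `Y ⊆ A^ℕ` has, in each coordinate, a separable and hence countable image in
the discrete space `A`; so all values of members of `Y` lie in one countable set. Hence a cover of
`A^ℕ` by separable pieces yields a family of countable sets, indexed by the pieces, containing the
range of every `f : ℕ → A`, hence cofinal in `[A]^{ℵ₀}`. Conversely, for countable `s ⊆ A` the set
`s^ℕ` is Polish, and the sets `s^ℕ` for `s` in a cofinal family cover `A^ℕ`.
-/

open Topology TopologicalSpace

lemma polishSpace_univ_pi {ι : Type*} [Countable ι] {X : ι → Type*}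
    [∀ i, TopologicalSpace (X i)] (s : ∀ i, Set (X i)) [∀ i, PolishSpace (s i)] :
    PolishSpace (univ.pi s) := by
  have hind : IsInducing (Equiv.Set.univPi s) :=
    (IsInducing.piMap fun _ => IsInducing.subtypeVal).of_comp_iff.1 IsInducing.subtypeVal
  exact ((Equiv.Set.univPi s).toHomeomorphOfIsInducing hind).isClosedEmbedding.polishSpace

lemma TopologicalSpace.IsSeparable.countable {X : Type*} [TopologicalSpace X]
    [DiscreteTopology X] {s : Set X} (hs : IsSeparable s) : s.Countable := by
  obtain ⟨c, hc, hsc⟩ := hs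
  exact hc.mono (by simpa using hsc)

lemma countable_iUnion_image_eval {ι X : Type*} [Countable ι] [TopologicalSpace X]
    [DiscreteTopology X] (Y : Set (ι → X)) [SeparableSpace Y] :
    (⋃ i, (fun f => f i) '' Y).Countable :=
  countable_iUnion fun i => ((IsSeparable.of_subtype Y).image (continuous_apply i)).countable

section CofCountableSubsets

variable {A : Type*}

variable (A) in
lemma exists_mk_eq_cofCountableSubsets :
    ∃ D : Set (Set A), (∀ s ∈ D, s.Countable ∧ s.Infinite) ∧
      (∀ t : Set A, t.Countable → t.Infinite → ∃ s ∈ D, t ⊆ s) ∧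
      #D = cofCountableSubsets A :=
  csInf_mem (s := {c | ∃ D : Set (Set A), (∀ s ∈ D, s.Countable ∧ s.Infinite) ∧
      (∀ t : Set A, t.Countable → t.Infinite → ∃ s ∈ D, t ⊆ s) ∧ #D = c})
    ⟨_, {s | s.Countable ∧ s.Infinite}, fun _ hs => hs,
      fun t htc hti => ⟨t, ⟨htc, hti⟩, subset_rfl⟩, rfl⟩

lemma exists_superset_mem_of_countable [Infinite A] {D : Set (Set A)}
    (hD : ∀ t : Set A, t.Countable → t.Infinite → ∃ s ∈ D, t ⊆ s) {t : Set A}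
    (ht : t.Countable) : ∃ s ∈ D, t ⊆ s := by
  obtain ⟨s, hsD, hts⟩ := hD (t ∪ range (Infinite.natEmbedding A))
    (ht.union (countable_range _))
    ((infinite_range_of_injective (Infinite.natEmbedding A).injective).mono subset_union_right)
  exact ⟨s, hsD, subset_union_left.trans hts⟩

-- Enlarging every member by a fixed countably infinite set makes the members infinite.
lemma cofCountableSubsets_le_mk [Infinite A] (D : Set (Set A)) (hDc : ∀ s ∈ D, s.Countable)
    (hD : ∀ t : Set A, t.Countable → t.Infinite → ∃ s ∈ D, t ⊆ s) :
    cofCountableSubsets A ≤ #D := by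
  set s₀ : Set A := range (Infinite.natEmbedding A)
  unfold cofCountableSubsets
  refine (csInf_le' (a := #((· ∪ s₀) '' D)) ?_).trans mk_image_le
  refine ⟨(· ∪ s₀) '' D, ?_, ?_, rfl⟩
  · rintro _ ⟨s, hs, rfl⟩
    exact ⟨(hDc s hs).union (countable_range _),
      (infinite_range_of_injective (Infinite.natEmbedding A).injective).mono subset_union_right⟩
  · intro t htc hti
    obtain ⟨s, hsD, hts⟩ := hD t htc hti
    exact ⟨s ∪ s₀, mem_image_of_mem _ hsD, hts.trans subset_union_left⟩

end CofCountableSubsets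

section DiscreteSequences

variable {A : Type} [TopologicalSpace A] [DiscreteTopology A] [Infinite A]

lemma exists_polish_cover_mk_le_cofCountableSubsets :
    ∃ F : Set (Set (ℕ → A)), (∀ Y ∈ F, PolishSpace Y) ∧ ⋃₀ F = Set.univ ∧
      #F ≤ cofCountableSubsets A := by
  obtain ⟨D, hDc, hD, hDcard⟩ := exists_mk_eq_cofCountableSubsets A
  refine ⟨(fun s => univ.pi fun _ => s) '' D, ?_, ?_, hDcard ▸ mk_image_le⟩
  · rintro _ ⟨s, hs, rfl⟩
    have : Countable s := (hDc s hs).1.to_subtype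
    have : PolishSpace s := inferInstance
    exact polishSpace_univ_pi _
  · refine eq_univ_of_forall fun f => ?_
    obtain ⟨s, hsD, hfs⟩ := exists_superset_mem_of_countable hD (countable_range f)
    exact ⟨_, mem_image_of_mem _ hsD, fun n _ => hfs (mem_range_self n)⟩

lemma cofCountableSubsets_le_mk_of_separable_cover (F : Set (Set (ℕ → A)))
    (hF : ∀ Y ∈ F, SeparableSpace Y) (hcover : ⋃₀ F = Set.univ) :
    cofCountableSubsets A ≤ #F := by
  refine (cofCountableSubsets_le_mk ((fun Y => ⋃ n, (fun f => f n) '' Y) '' F) ?_ ?_).trans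
    mk_image_le
  · rintro _ ⟨Y, hY, rfl⟩
    have := hF Y hY
    exact countable_iUnion_image_eval Y
  · intro t htc hti
    obtain ⟨f, rfl⟩ := htc.exists_eq_range hti.nonempty
    obtain ⟨Y, hY, hfY⟩ := hcover ▸ mem_univ f
    exact ⟨_, mem_image_of_mem _ hY, range_subset_iff.2 fun n =>
      mem_iUnion_of_mem n (mem_image_of_mem _ hfY)⟩

end DiscreteSequences

/-- For an uncountable discrete `κ`, the space `κ^ω` can be covered by
`cf([κ]^{ℵ₀}, ⊆)` many Polish subspaces, and every covering of `κ^ω` by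
separable subspaces has cardinality at least `cf([κ]^{ℵ₀}, ⊆)`. -/
theorem cov_kappa_omega (κ : Cardinal) (hκ : ℵ₀ < κ)
    (A : Type) [TopologicalSpace A] [DiscreteTopology A] (hA : #A = κ) :
    (∃ F : Set (Set (ℕ → A)), (∀ Y ∈ F, PolishSpace Y) ∧ ⋃₀ F = Set.univ ∧
      #F ≤ cofCountableSubsets A) ∧
    (∀ F : Set (Set (ℕ → A)), (∀ Y ∈ F, TopologicalSpace.SeparableSpace Y) →
      ⋃₀ F = Set.univ → cofCountableSubsets A ≤ #F) := by
  have : Infinite A := Cardinal.infinite_iff.2 (hA ▸ hκ.le)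
  exact ⟨exists_polish_cover_mk_le_cofCountableSubsets,
    cofCountableSubsets_le_mk_of_separable_cover⟩
end

section
/- Let X be a completely metrizable space of weight κ < ℵ_ω with κ uncountable. If there is a continuous bijection from X onto [0,1], then [0,1] can be partitioned into κ Borel sets. -/
/-!
Let `κ = ℵ_n`. Induction on `n`: if `T` is a Gδ set in the closure of a set `S` of size
`ℵ_{n+1}`, enumerate `S` in order type `ω_{n+1}` and let `C_α` be the closure of its first `α`
points. Since `ω_{n+1}` has uncountable cofinality, every point of `T` lies in some `C_α`, so the
layers `T ∩ C_α \ ⋃_{β<α} C_β` partition `T`; each layer is Gδ and lies in the closure of fewer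
than `ℵ_{n+1}` points, hence splits into at most `ℵ_n` separable Gδ pieces. Applied to `X`, this
gives at most `κ` separable Gδ pieces, and at least `κ` since otherwise `X` would have weight
below `κ`. By Lusin–Suslin the images of the pieces under the continuous bijection are Borel.
-/

open Cardinal Set TopologicalSpace

/-- The weight of a topological space: the least cardinality of a basis. -/
noncomputable def tweight (X : Type*) [TopologicalSpace X] : Cardinal :=
  sInf { c | ∃ B : Set (Set X), IsTopologicalBasis B ∧ #B = c }

theorem exists_dense_mk_le_tweight (X : Type*) [TopologicalSpace X] :
    ∃ D : Set X, Dense D ∧ #D ≤ tweight X := by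
  obtain ⟨B, hB, hBc⟩ : ∃ B : Set (Set X), IsTopologicalBasis B ∧ #B = tweight X :=
    csInf_mem (s := { c | ∃ B : Set (Set X), IsTopologicalBasis B ∧ #B = c })
      ⟨_, _, isTopologicalBasis_opens, rfl⟩
  have hpt (b : {b // b ∈ B ∧ b.Nonempty}) : ∃ x, x ∈ b.1 := b.2.2
  choose pt hpt using hpt
  refine ⟨range pt, hB.dense_iff.2 fun b hbB hb ↦ ⟨_, hpt ⟨b, hbB, hb⟩, mem_range_self _⟩, ?_⟩
  calc #(range pt) ≤ #{b // b ∈ B ∧ b.Nonempty} := mk_range_le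
    _ ≤ #B := mk_le_mk_of_subset fun _ hb ↦ hb.1
    _ = tweight X := hBc

theorem tweight_le_mk_mul_aleph0_of_dense {X : Type*} [PseudoMetricSpace X] {D : Set X}
    (hD : Dense D) : tweight X ≤ #D * ℵ₀ := by
  let ball (p : D × ℕ) : Set X := Metric.ball p.1 (1 / (p.2 + 1))
  have hbasis : IsTopologicalBasis (range ball) := by
    refine isTopologicalBasis_of_isOpen_of_nhds (by rintro _ ⟨p, rfl⟩; exact Metric.isOpen_ball)
      fun a u ha hu ↦ ?_
    obtain ⟨ε, hε, hεu⟩ := Metric.isOpen_iff.1 hu a ha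
    obtain ⟨k, hk⟩ := exists_nat_one_div_lt (half_pos hε)
    obtain ⟨d, hdD, hd⟩ := hD.exists_dist_lt a (Nat.one_div_pos_of_nat (n := k))
    refine ⟨ball (⟨d, hdD⟩, k), mem_range_self _, hd, (Metric.ball_subset_ball' ?_).trans hεu⟩
    linarith [dist_comm a d]
  calc tweight X ≤ #(range ball) := csInf_le' ⟨_, hbasis, rfl⟩
    _ ≤ #(D × ℕ) := mk_range_le
    _ = #D * ℵ₀ := by simp

theorem tweight_le_mk_mul_aleph0_of_sUnion_eq_univ {X : Type*} [PseudoMetricSpace X]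
    {P : Set (Set X)} (hP : ⋃₀ P = Set.univ) (hsep : ∀ p ∈ P, IsSeparable p) :
    tweight X ≤ #P * ℵ₀ := by
  choose c hc hpc using fun p : P ↦ hsep p p.2
  have hdense : Dense (⋃ p, c p) := fun x ↦ by
    obtain ⟨p, hp, hxp⟩ := mem_sUnion.1 (hP.symm ▸ mem_univ x : x ∈ ⋃₀ P)
    exact closure_mono (subset_iUnion c ⟨p, hp⟩) (hpc ⟨p, hp⟩ hxp)
  calc tweight X ≤ #(⋃ p, c p) * ℵ₀ := tweight_le_mk_mul_aleph0_of_dense hdense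
    _ ≤ #P * ℵ₀ * ℵ₀ := by
      gcongr
      exact (mk_iUnion_le c).trans (by gcongr; exact ciSup_le' fun p ↦ (hc p).le_aleph0)
    _ = #P * ℵ₀ := by rw [mul_assoc, aleph0_mul_aleph0]

open Function

section RankLayer

variable {X ι : Type*} [TopologicalSpace X] [LinearOrder ι] (S : Set X) (g : X → ι)

/-- `C_i` of the proof sketch, the points of `S` being ranked by `g`. -/
def rankClosure (i : ι) : Set X := closure {s ∈ S | g s < i}

def rankLayer (T : Set X) (i : ι) : Set X :=
  (T ∩ rankClosure S g i) \ ⋃ j < i, rankClosure S g j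

variable {S g}

theorem rankClosure_mono : Monotone (rankClosure S g) :=
  fun _ _ hij ↦ closure_mono fun _ hs ↦ ⟨hs.1, hs.2.trans_le hij⟩

theorem mem_rankClosure_of_tendsto {u : ℕ → X} {t : X} {i : ι} (hu : ∀ k, u k ∈ S)
    (hui : ∀ k, g (u k) < i) (ht : Filter.Tendsto u Filter.atTop (nhds t)) :
    t ∈ rankClosure S g i :=
  mem_closure_of_tendsto ht (Filter.Eventually.of_forall fun k ↦ ⟨hu k, hui k⟩)

theorem pairwise_disjoint_rankLayer (T : Set X) : Pairwise (Disjoint on rankLayer S g T) :=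
  (pairwise_disjoint_on _).2 fun _ _ hij ↦ disjoint_left.2 fun _ hi hj ↦
    hj.2 (mem_biUnion hij hi.1.2)

/-- Take `r` to be the ranks of a sequence in `S` converging to `t`: a stage above all of them
would contain `t`. -/
theorem exists_biUnion_rankClosure_eq_iUnion [FrechetUrysohnSpace X] {T : Set X} {i : ι}
    {t : X} (ht : t ∈ rankLayer S g T i) :
    ∃ r : ℕ → ι, ⋃ j < i, rankClosure S g j = ⋃ k, rankClosure S g (r k) := by
  obtain ⟨u, hu, hut⟩ := mem_closure_iff_seq_limit.1 ht.1.2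
  refine ⟨fun k ↦ g (u k), (iUnion₂_subset fun j hj ↦ ?_).antisymm
    (iUnion_subset fun k ↦ subset_biUnion_of_mem (u := rankClosure S g) (hu k).2)⟩
  by_cases hr : ∃ k, j ≤ g (u k)
  · obtain ⟨k, hk⟩ := hr
    exact (rankClosure_mono hk).trans (subset_iUnion (fun k ↦ rankClosure S g (g (u k))) k)
  · push Not at hr
    exact (ht.2 (mem_biUnion hj (mem_rankClosure_of_tendsto (fun k ↦ (hu k).1) hr hut))).elim

theorem isGδ_rankLayer [FrechetUrysohnSpace X] [PerfectlyNormalSpace X] {T : Set X}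
    (hT : IsGδ T) (i : ι) : IsGδ (rankLayer S g T i) := by
  obtain hE | ⟨t, ht⟩ := (rankLayer S g T i).eq_empty_or_nonempty
  · exact hE ▸ IsGδ.empty
  obtain ⟨r, hr⟩ := exists_biUnion_rankClosure_eq_iUnion ht
  rw [rankLayer, hr, sdiff_eq, compl_iUnion]
  exact (hT.inter isClosed_closure.isGδ).inter
    (.iInter fun k ↦ isClosed_closure.isOpen_compl.isGδ)

theorem exists_forall_lt_of_aleph0_lt_cof (hι : ℵ₀ < Order.cof ι) (r : ℕ → ι) :
    ∃ i, ∀ k, r k < i := by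
  have : ¬ IsCofinal (range r) := fun h ↦
    ((Order.cof_le h).trans (countable_range r).le_aleph0).not_gt hι
  simpa [IsCofinal] using this

theorem iUnion_rankLayer [FrechetUrysohnSpace X] [WellFoundedLT ι] (hι : ℵ₀ < Order.cof ι)
    {T : Set X} (hTS : T ⊆ closure S) : ⋃ i, rankLayer S g T i = T := by
  refine (iUnion_subset fun i ↦ sdiff_subset.trans inter_subset_left).antisymm fun t ht ↦ ?_
  obtain ⟨u, hu, hut⟩ := mem_closure_iff_seq_limit.1 (hTS ht)
  obtain ⟨a, ha⟩ := exists_forall_lt_of_aleph0_lt_cof hι fun k ↦ g (u k)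
  obtain ⟨i, hi, hmin⟩ := wellFounded_lt.has_min {i | t ∈ rankClosure S g i}
    ⟨a, mem_rankClosure_of_tendsto hu ha hut⟩
  exact mem_iUnion.2 ⟨i, ⟨ht, hi⟩, by simpa using fun j hj hjt ↦ hmin j hjt hj⟩

end RankLayer

structure IsSeparableGδPartition {X : Type*} [TopologicalSpace X] (P : Set (Set X)) (T : Set X) :
    Prop where
  pairwiseDisjoint : P.PairwiseDisjoint id
  sUnion_eq : ⋃₀ P = T
  isGδ : ∀ p ∈ P, IsGδ p
  isSeparable : ∀ p ∈ P, IsSeparable p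

theorem IsSeparableGδPartition.iUnion {X ι : Type*} [TopologicalSpace X] {E : ι → Set X}
    (hE : Pairwise (Disjoint on E)) {P : ι → Set (Set X)}
    (hP : ∀ i, IsSeparableGδPartition (P i) (E i)) :
    IsSeparableGδPartition (⋃ i, P i) (⋃ i, E i) where
  pairwiseDisjoint := by
    have hE' : (univ : Set ι).PairwiseDisjoint fun i ↦ ⋃ p ∈ P i, id p := fun i _ j _ hij ↦ by
      simpa only [id, ← sUnion_eq_biUnion, (hP _).sUnion_eq] using hE hij
    simpa using hE'.biUnion fun i _ ↦ (hP i).pairwiseDisjoint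
  sUnion_eq := by simp only [sUnion_iUnion, (hP _).sUnion_eq]
  isGδ p hp := by
    obtain ⟨i, hi⟩ := mem_iUnion.1 hp
    exact (hP i).isGδ p hi
  isSeparable p hp := by
    obtain ⟨i, hi⟩ := mem_iUnion.1 hp
    exact (hP i).isSeparable p hi

theorem exists_isSeparableGδPartition {X : Type*} [TopologicalSpace X] [FrechetUrysohnSpace X]
    [PerfectlyNormalSpace X] (n : ℕ) {T S : Set X} (hT : IsGδ T) (hTS : T ⊆ closure S)
    (hS : #S ≤ ℵ_ n) : ∃ P, IsSeparableGδPartition P T ∧ #P ≤ ℵ_ n := by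
  induction n generalizing T S with
  | zero =>
    refine ⟨{T}, ⟨pairwiseDisjoint_singleton _ _, sUnion_singleton _, by simpa using hT, ?_⟩, ?_⟩
    · simp only [mem_singleton_iff, forall_eq]
      exact ⟨S, mk_le_aleph0_iff.1 (by simpa using hS) |> countable_coe_iff.1, hTS⟩
    · simp
  | succ n ih =>
    let ι := (ℵ_ ((n + 1 : ℕ) : Ordinal)).ord.ToType
    have hιcard : #ι = ℵ_ ((n + 1 : ℕ) : Ordinal) := by simp [ι]
    have hιcof : ℵ₀ < Order.cof ι := by
      rw [Ordinal.cof_toType, Nat.cast_succ, (isRegular_aleph_add_one _).cof_ord]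
      exact aleph0_lt_aleph_one.trans_le (aleph_le_aleph.2 (by simp))
    obtain ⟨g, hg⟩ : ∃ g : X → ι, InjOn g S := by
      have : Nonempty ι := mk_ne_zero_iff.1 (hιcard ▸ (aleph_pos _).ne')
      obtain ⟨e⟩ := le_def _ _ |>.1 (hS.trans hιcard.ge)
      let g := extend Subtype.val e fun _ ↦ Classical.arbitrary ι
      have hge (s : S) : g s = e s := Subtype.val_injective.extend_apply _ _ s
      exact ⟨g, fun a ha b hb hab ↦ congrArg Subtype.val <|
        e.injective ((hge ⟨a, ha⟩).symm.trans (hab.trans (hge ⟨b, hb⟩)))⟩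
    have hlayer (i : ι) : ∃ P, IsSeparableGδPartition P (rankLayer S g T i) ∧ #P ≤ ℵ_ n := by
      refine ih (isGδ_rankLayer hT i) (fun t ht ↦ ht.1.2) ?_
      calc #{s ∈ S | g s < i} ≤ #(Iio i) :=
            mk_le_of_injective (f := fun s ↦ ⟨g s, s.2.2⟩) fun a b hab ↦
              Subtype.ext (hg a.2.1 b.2.1 (congrArg Subtype.val hab))
        _ ≤ ℵ_ n := Order.lt_succ_iff.1 <| (mk_Iio_lt i (by simp [ι])).trans_eq <| by
            rw [hιcard, Nat.cast_succ, ← succ_aleph]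
    choose P hP hPcard using hlayer
    refine ⟨⋃ i, P i, iUnion_rankLayer hιcof hTS ▸ .iUnion (pairwise_disjoint_rankLayer T) hP, ?_⟩
    calc #(⋃ i, P i) ≤ #ι * ⨆ i, #(P i) := mk_iUnion_le P
      _ ≤ ℵ_ ((n + 1 : ℕ) : Ordinal) * ℵ_ n := by
        gcongr
        · exact hιcard.le
        · exact ciSup_le' hPcard
      _ = ℵ_ ((n + 1 : ℕ) : Ordinal) :=
        mul_eq_left (aleph0_le_aleph _) (aleph_le_aleph.2 (by simp)) (aleph_pos _).ne'

/-- Lusin–Suslin, applied in the Polish space `closure p`. -/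
theorem IsGδ.measurableSet_image_of_isSeparable {X Y : Type*} [TopologicalSpace X]
    [IsCompletelyMetrizableSpace X] [TopologicalSpace Y] [T2Space Y] [MeasurableSpace Y]
    [OpensMeasurableSpace Y] {p : Set X} (hp : IsGδ p) (hsep : IsSeparable p) {f : X → Y}
    (hf : ContinuousOn f p) (hinj : InjOn f p) : MeasurableSet (f '' p) := by
  let K := closure p
  have : IsCompletelyMetrizableSpace K := isClosed_closure.isCompletelyMetrizableSpace
  have : SeparableSpace K := hsep.closure.separableSpace
  let : MeasurableSpace K := borel K
  have : BorelSpace K := ⟨rfl⟩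
  have hpK : ((↑) : K → X) '' ((↑) ⁻¹' p) = p :=
    image_preimage_eq_of_subset (Subtype.range_coe ▸ subset_closure)
  rw [← hpK, image_image]
  exact (hp.preimage continuous_subtype_val).measurableSet.image_of_continuousOn_injOn
    (hf.comp continuous_subtype_val.continuousOn fun _ h ↦ h)
    fun a ha b hb hab ↦ Subtype.ext (hinj ha hb hab)

theorem exists_nat_eq_aleph_of_lt_aleph_omega0 {c : Cardinal} (h₀ : ℵ₀ ≤ c)
    (hω : c < ℵ_ Ordinal.omega0) : ∃ n : ℕ, c = ℵ_ n := by
  obtain ⟨o, rfl⟩ := mem_range_aleph_iff.2 h₀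
  obtain ⟨n, rfl⟩ := Ordinal.lt_omega0.1 (aleph_lt_aleph.1 hω)
  exact ⟨n, rfl⟩

/-- If `X` is completely metrizable of uncountable weight `κ < ℵ_ω` and there is a
continuous bijection from `X` onto `[0,1]`, then `[0,1]` can be partitioned into
`κ` Borel sets. -/
theorem borel_partition_of_continuous_bijection (X : Type) [MetricSpace X]
    [CompleteSpace X] (κ : Cardinal) (hκ : ℵ₀ < κ)
    (hκω : κ < Cardinal.aleph Ordinal.omega0) (hw : tweight X = κ)
    (f : X → Set.Icc (0 : ℝ) 1) (hf : Continuous f) (hbij : Function.Bijective f) :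
    ∃ P : Set (Set (Set.Icc (0 : ℝ) 1)), P.PairwiseDisjoint id ∧ ⋃₀ P = Set.univ ∧
      #P = κ ∧ ∀ B ∈ P, MeasurableSet B := by
  obtain ⟨n, hn⟩ := exists_nat_eq_aleph_of_lt_aleph_omega0 hκ.le hκω
  obtain ⟨S, hSd, hSκ⟩ := exists_dense_mk_le_tweight X
  obtain ⟨PX, hPX, hPXκ⟩ := exists_isSeparableGδPartition n IsGδ.univ
    (by rw [hSd.closure_eq]) (hn ▸ hw ▸ hSκ)
  have hκPX : κ ≤ #PX := by
    have hκmax : κ ≤ max #PX ℵ₀ := hw ▸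
      (tweight_le_mk_mul_aleph0_of_sUnion_eq_univ hPX.sUnion_eq hPX.isSeparable).trans
        (mul_le_max_of_aleph0_le_right le_rfl)
    exact (le_max_iff.1 hκmax).resolve_right hκ.not_ge
  refine ⟨image f '' PX, ?_, ?_, ?_, ?_⟩
  · rintro _ ⟨p, hp, rfl⟩ _ ⟨q, hq, rfl⟩ hpq
    exact (disjoint_image_iff hbij.1).2 (hPX.pairwiseDisjoint hp hq fun h ↦ hpq (h ▸ rfl))
  · rw [← image_sUnion, hPX.sUnion_eq, image_univ, hbij.2.range_eq]
  · rw [mk_image_eq (image_injective.2 hbij.1)]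
    exact le_antisymm (hn ▸ hPXκ) hκPX
  · rintro _ ⟨p, hp, rfl⟩
    exact (hPX.isGδ p hp).measurableSet_image_of_isSeparable (hPX.isSeparable p hp)
      hf.continuousOn hbij.1.injOn
end

section
/- Let κ be an uncountable cardinal with cofinality ω and X a completely metrizable space of weight λ ≥ κ such that every closed subspace of X is locally <κ-like. Then X can be partitioned into at most λ completely metrizable subspaces, each of weight strictly less than κ. -/
/-!
Peel `X` transfinitely: from each nonempty closed stage `K` remove a nonempty set `K ∩ U K`
of weight `< κ` with `U K` open (local `<κ`-likeness of the closed subspace `K`), and intersect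
at limit stages. The stages stay closed, so every removed layer is closed ∩ open, hence `G_δ`.
A point chosen in each layer has the open neighbourhood `U` of its stage, which misses all later
stages; these points form a right-separated family, which injects into a basis. Hence the
process stops before `(tweight X)⁺`, and there are at most `λ` layers.
-/

open Cardinal Set TopologicalSpace

/-- A space is locally `<κ`-like if every nonempty open subset contains a nonempty
open subset of weight `< κ`. -/
def LocallyLtLike (Z : Type*) [TopologicalSpace Z] (κ : Cardinal) : Prop :=
  ∀ U : Set Z, IsOpen U → U.Nonempty →
    ∃ V : Set Z, IsOpen V ∧ V.Nonempty ∧ V ⊆ U ∧ tweight V < κ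

universe u v

theorem exists_isTopologicalBasis_mk_eq_tweight (X : Type u) [TopologicalSpace X] :
    ∃ B : Set (Set X), IsTopologicalBasis B ∧ #B = tweight X :=
  csInf_mem (s := { c | ∃ B : Set (Set X), IsTopologicalBasis B ∧ #B = c })
    ⟨_, {U | IsOpen U}, isTopologicalBasis_opens, rfl⟩

section Weight

variable {X : Type u} [TopologicalSpace X]

theorem tweight_le_of_isInducing {Y : Type u} [TopologicalSpace Y] {f : X → Y}
    (hf : Topology.IsInducing f) : tweight X ≤ tweight Y := by
  obtain ⟨B, hB, hcard⟩ := exists_isTopologicalBasis_mk_eq_tweight Y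
  calc tweight X ≤ #(preimage f '' B) := csInf_le' ⟨_, hB.isInducing hf, rfl⟩
    _ ≤ tweight Y := hcard ▸ mk_image_le

theorem lift_mk_le_tweight_of_rightSeparated {ι : Type v} [LinearOrder ι] (x : ι → X)
    (V : ι → Set X) (hV : ∀ i, IsOpen (V i)) (hxV : ∀ i, x i ∈ V i)
    (hsep : ∀ i j, i < j → x j ∉ V i) : lift.{u} #ι ≤ lift.{v} (tweight X) := by
  obtain ⟨B, hB, hcard⟩ := exists_isTopologicalBasis_mk_eq_tweight X
  have hnbhd : ∀ i, ∃ b ∈ B, x i ∈ b ∧ b ⊆ V i := fun i =>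
    hB.exists_subset_of_mem_open (hxV i) (hV i)
  choose b hbB hxb hbV using hnbhd
  have hinj : Function.Injective fun i => (⟨b i, hbB i⟩ : B) := by
    have hne : ∀ i j, i < j → b i ≠ b j := fun i j hij he =>
      hsep i j hij (hbV i (he ▸ hxb j))
    intro i j he
    have he : b i = b j := congrArg Subtype.val he
    rcases lt_trichotomy i j with h | h | h
    · exact absurd he (hne i j h)
    · exact h
    · exact absurd he.symm (hne j i h)
  rw [← hcard]
  exact lift_mk_le'.2 ⟨⟨_, hinj⟩⟩

end Weight

theorem LocallyLtLike.exists_isOpen_inter_nonempty_tweight_lt {X : Type u} [TopologicalSpace X]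
    {K : Set X} {κ : Cardinal.{u}} (hK : LocallyLtLike K κ) (hne : K.Nonempty) :
    ∃ U : Set X, IsOpen U ∧ (K ∩ U).Nonempty ∧ tweight ↥(K ∩ U) < κ := by
  have : Nonempty K := hne.to_subtype
  obtain ⟨V, hVopen, hVne, -, hVκ⟩ := hK univ isOpen_univ univ_nonempty
  obtain ⟨U, hUopen, rfl⟩ := isOpen_induced_iff.1 hVopen
  let ι : ↥(Subtype.val ⁻¹' U : Set K) → X := Subtype.val ∘ Subtype.val
  have hemb : Topology.IsEmbedding ι :=
    Topology.IsEmbedding.subtypeVal.comp Topology.IsEmbedding.subtypeVal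
  have hrange : range ι = K ∩ U := by
    rw [range_comp, Subtype.range_coe, Subtype.image_preimage_coe]
  obtain ⟨⟨x, hxK⟩, hxU⟩ := hVne
  refine ⟨U, hUopen, ⟨x, hxK, hxU⟩, ?_⟩
  rw [← hrange]
  exact (tweight_le_of_isInducing hemb.toHomeomorph.symm.isInducing).trans_lt hVκ

theorem mk_image_Iio_le_card {α : Type u} (f : Ordinal.{u} → α) (o : Ordinal.{u}) :
    #(f '' Iio o) ≤ o.card := by
  have h := mk_image_le_lift (f := f) (s := Iio o)
  rwa [mk_Iio_ordinal, lift_lift, lift_le] at h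

section Peel

variable {X : Type u} (U : Set X → Set X)

-- Stage `succ o` is `peel U o \ U (peel U o)` and limit stages are intersections, with no
-- case split in the definition.
noncomputable def peel (o : Ordinal.{u}) : Set X :=
  ⋂ β : Iio o, (peel β.1 \ U (peel β.1))
termination_by o
decreasing_by exact β.2

def peelLayer (o : Ordinal.{u}) : Set X := peel U o ∩ U (peel U o)

theorem peel_eq (o : Ordinal.{u}) : peel U o = ⋂ β : Iio o, (peel U β.1 \ U (peel U β.1)) := by
  rw [peel]

theorem peel_subset_sdiff {β o : Ordinal.{u}} (h : β < o) :
    peel U o ⊆ peel U β \ U (peel U β) := by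
  rw [peel_eq U o]
  exact iInter_subset _ (⟨β, h⟩ : Iio o)

open Function in
theorem pairwise_disjoint_peelLayer : Pairwise (Disjoint on (peelLayer U)) := by
  refine (pairwise_disjoint_on _).2 fun a b hab => Set.disjoint_left.2 fun x hxa hxb => ?_
  exact (peel_subset_sdiff U hab hxb.1).2 hxa.2

theorem sUnion_image_peelLayer {o : Ordinal.{u}} (h : peel U o = ∅) :
    ⋃₀ (peelLayer U '' Iio o) = Set.univ := by
  refine eq_univ_of_forall fun x => ?_
  by_contra hx
  simp only [sUnion_image, mem_iUnion, mem_Iio, not_exists] at hx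
  have hmem : ∀ γ ≤ o, x ∈ peel U γ := by
    intro γ
    induction γ using WellFoundedLT.induction with
    | _ γ ih =>
      intro hγ
      rw [peel_eq]
      refine mem_iInter.2 fun β => ?_
      have hxβ := ih β.1 β.2 (β.2.le.trans hγ)
      exact ⟨hxβ, fun hxU => hx β.1 (β.2.trans_le hγ) ⟨hxβ, hxU⟩⟩
  simpa [h] using hmem o le_rfl

variable [TopologicalSpace X]

theorem isClosed_peel (hU : ∀ K, IsOpen (U K)) (o : Ordinal.{u}) : IsClosed (peel U o) := by
  induction o using WellFoundedLT.induction with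
  | _ o ih =>
    rw [peel_eq]
    exact isClosed_iInter fun β => (ih β.1 β.2).sdiff (hU _)

theorem exists_peel_eq_empty (hU : ∀ K, IsOpen (U K))
    (hmem : ∀ K, IsClosed K → K.Nonempty → (K ∩ U K).Nonempty) :
    ∃ o : Ordinal.{u}, o.card ≤ tweight X ∧ peel U o = ∅ ∧
      ∀ β < o, (peel U β).Nonempty := by
  set μ := Order.succ (tweight X)
  have hterm : ∃ o < μ.ord, peel U o = ∅ := by
    by_contra! hne
    have hlayer : ∀ o : Iio μ.ord, (peelLayer U o.1).Nonempty := fun o =>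
      hmem _ (isClosed_peel U hU o.1) (hne o.1 o.2)
    choose x hx using hlayer
    have hle := lift_mk_le_tweight_of_rightSeparated x (fun o => U (peel U o.1))
      (fun o => hU _) (fun o => (hx o).2) fun i j hij => (peel_subset_sdiff U hij (hx j).1).2
    rw [mk_Iio_ordinal, card_ord, lift_lift, lift_le] at hle
    exact (Order.lt_succ_of_not_isMax (not_isMax _)).not_ge hle
  obtain ⟨o, hoμ, ho⟩ := hterm
  set S := {o : Ordinal.{u} | peel U o = ∅}
  have hoS : o ∈ S := ho
  refine ⟨sInf S, ?_, csInf_mem ⟨o, hoS⟩, fun β hβ => ?_⟩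
  · exact Order.lt_succ_iff.1 (lt_ord.1 ((csInf_le' hoS).trans_lt hoμ))
  · exact nonempty_iff_ne_empty.2 (notMem_of_lt_csInf' (s := S) hβ)

end Peel

theorem partition_of_locally_small_general (κ : Cardinal) (X : Type) [MetricSpace X]
    (lam : Cardinal) (hw : tweight X = lam)
    (hloc : ∀ K : Set X, IsClosed K → LocallyLtLike K κ) :
    ∃ P : Set (Set X), P.PairwiseDisjoint id ∧ ⋃₀ P = Set.univ ∧ #P ≤ lam ∧
      ∀ Y ∈ P, IsGδ Y ∧ tweight Y < κ := by
  have hsmall : ∀ K : Set X, ∃ U, IsOpen U ∧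
      (IsClosed K → K.Nonempty → (K ∩ U).Nonempty ∧ tweight ↥(K ∩ U) < κ) := by
    intro K
    by_cases hK : IsClosed K ∧ K.Nonempty
    · obtain ⟨U, hU, hne, hlt⟩ := (hloc K hK.1).exists_isOpen_inter_nonempty_tweight_lt hK.2
      exact ⟨U, hU, fun _ _ => ⟨hne, hlt⟩⟩
    · exact ⟨∅, isOpen_empty, fun hc hn => absurd ⟨hc, hn⟩ hK⟩
  choose U hUopen hU using hsmall
  obtain ⟨o, hcard, hempty, hne⟩ :=
    exists_peel_eq_empty U hUopen fun K hK hK' => (hU K hK hK').1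
  have hdisj : (range (peelLayer U)).PairwiseDisjoint id :=
    pairwiseDisjoint_range_iff.2 fun _ _ hab =>
      pairwise_disjoint_peelLayer U (ne_of_apply_ne _ hab)
  refine ⟨peelLayer U '' Iio o, hdisj.subset (image_subset_range _ _),
    sUnion_image_peelLayer U hempty, (mk_image_Iio_le_card _ o).trans (hw ▸ hcard), ?_⟩
  rintro _ ⟨β, hβ, rfl⟩
  have hclosed := isClosed_peel U hUopen β
  exact ⟨hclosed.isGδ.inter (hUopen _).isGδ, (hU _ hclosed (hne β hβ)).2⟩

/-- If `κ` is uncountable of cofinality `ω`, and `X` is a completely metrizable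
space of weight `λ ≥ κ` all of whose closed subspaces are locally `<κ`-like, then
`X` can be partitioned into at most `λ` completely metrizable (equivalently,
`G_δ`) subspaces, each of weight `< κ`. -/
theorem partition_of_locally_small (κ : Cardinal) (hκ : ℵ₀ < κ)
    (hcf : κ.ord.cof = ℵ₀) (X : Type) [MetricSpace X] [CompleteSpace X]
    (lam : Cardinal) (hw : tweight X = lam) (hlam : κ ≤ lam)
    (hloc : ∀ K : Set X, IsClosed K → LocallyLtLike K κ) :
    ∃ P : Set (Set X), P.PairwiseDisjoint id ∧ ⋃₀ P = Set.univ ∧ #P ≤ lam ∧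
      ∀ Y ∈ P, IsGδ Y ∧ tweight Y < κ :=
  partition_of_locally_small_general κ X lam hw hloc
end
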